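/- Let p ∈ [1,∞) and let X, Y be nonempty compact metric spaces satisfying the p-triangle inequality. (1) If there exist ε, δ ≥ 0 and points x_1,…,x_N ∈ X and y_1,…,y_N ∈ Y such that {x_1,…,x_N} is an ε-net of X, {y_1,…,y_N} is an ε-net of Y, and Λ_p(d_X(x_i,x_j), d_Y(y_i,y_j)) ≤ δ for all i,j, then d_GH^{(p)}(X,Y) ≤ (δ^p + 2ε^p)^{1/p}. (2) If d_GH^{(p)}(X,Y) ≤ ε for some ε > 0, then there exist points x_1,…,x_N ∈ X and y_1,…,y_N ∈ Y such that {x_1,…,x_N} is a 5^{1/p}ε-net of X, {y_1,…,y_N} is a 5^{1/p}ε-net of Y, and Λ_p(d_X(x_i,x_j), d_Y(y_i,y_j)) ≤ 2^{1/p}ε for all i,j. -/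
import Mathlib


noncomputable section

/-- A correspondence between `X` and `Y`. -/
def IsCorrespondence {X Y : Type*} (R : Set (X × Y)) : Prop :=
  (∀ x : X, ∃ y : Y, (x, y) ∈ R) ∧ ∀ y : Y, ∃ x : X, (x, y) ∈ R

/-- `Λ_p(a,b) = |a^p - b^p|^(1/p)`. -/
def lambdaP (p a b : ℝ) : ℝ := |a ^ p - b ^ p| ^ (1 / p)

/-- The `p`-distortion of a correspondence between two metric spaces. -/
def pDistortion {X Y : Type*} [MetricSpace X] [MetricSpace Y] (p : ℝ)
    (R : Set (X × Y)) : ℝ :=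
  sSup {r : ℝ | ∃ a ∈ R, ∃ b ∈ R, r = lambdaP p (dist a.1 b.1) (dist a.2 b.2)}

/-- The `p`-Gromov–Hausdorff distance `2^(-1/p) · inf_R dis_p(R)`. -/
def dGHp (p : ℝ) (X Y : Type) [MetricSpace X] [MetricSpace Y] : ℝ :=
  (2 : ℝ) ^ (-(1 / p)) *
    sInf {r : ℝ | ∃ R : Set (X × Y), IsCorrespondence R ∧ r = pDistortion p R}

lemma rpow_oneDiv_rpow {x p : ℝ} (hp : 0 < p) (hx : 0 ≤ x) : (x ^ p) ^ (1 / p) = x := by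
  rw [← Real.rpow_mul hx, mul_one_div_cancel hp.ne', Real.rpow_one]

lemma rpow_rpow_oneDiv {x p : ℝ} (hp : 0 < p) (hx : 0 ≤ x) : (x ^ (1 / p)) ^ p = x := by
  rw [← Real.rpow_mul hx, one_div_mul_cancel hp.ne', Real.rpow_one]

lemma lambdaP_nonneg (p a b : ℝ) : 0 ≤ lambdaP p a b := Real.rpow_nonneg (abs_nonneg _) _

lemma lambdaP_le_of_abs_le {p a b c : ℝ} (hp : 0 < p) (h : |a ^ p - b ^ p| ≤ c) :
    lambdaP p a b ≤ c ^ (1 / p) :=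
  Real.rpow_le_rpow (abs_nonneg _) h (by positivity)

lemma abs_le_of_lambdaP_le {p a b c : ℝ} (hp : 0 < p) (hc : 0 ≤ c)
    (h : lambdaP p a b ≤ c) : |a ^ p - b ^ p| ≤ c ^ p := by
  have := Real.rpow_le_rpow (lambdaP_nonneg p a b) h hp.le
  rwa [lambdaP, rpow_rpow_oneDiv hp (abs_nonneg _)] at this

lemma distSet_bddAbove {X Y : Type} [MetricSpace X] [CompactSpace X]
    [MetricSpace Y] [CompactSpace Y] (p : ℝ) (hp : 0 < p) (R : Set (X × Y)) :
    BddAbove {r : ℝ | ∃ a ∈ R, ∃ b ∈ R, r = lambdaP p (dist a.1 b.1) (dist a.2 b.2)} := by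
  set D : ℝ := max (Metric.diam (Set.univ : Set X)) (Metric.diam (Set.univ : Set Y)) with hD
  have hD0 : 0 ≤ D := le_max_of_le_left Metric.diam_nonneg
  refine ⟨D, ?_⟩
  rintro r ⟨a, _, b, _, rfl⟩
  have h1 : dist a.1 b.1 ≤ D :=
    le_trans (Metric.dist_le_diam_of_mem (Metric.isBounded_of_compactSpace)
      (Set.mem_univ _) (Set.mem_univ _)) (le_max_left _ _)
  have h2 : dist a.2 b.2 ≤ D :=
    le_trans (Metric.dist_le_diam_of_mem (Metric.isBounded_of_compactSpace)
      (Set.mem_univ _) (Set.mem_univ _)) (le_max_right _ _)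
  have h1' : dist a.1 b.1 ^ p ≤ D ^ p := Real.rpow_le_rpow dist_nonneg h1 hp.le
  have h2' : dist a.2 b.2 ^ p ≤ D ^ p := Real.rpow_le_rpow dist_nonneg h2 hp.le
  have habs : |dist a.1 b.1 ^ p - dist a.2 b.2 ^ p| ≤ D ^ p := by
    rw [abs_sub_le_iff]
    constructor <;> nlinarith [Real.rpow_nonneg (dist_nonneg : (0:ℝ) ≤ dist a.1 b.1) p,
      Real.rpow_nonneg (dist_nonneg : (0:ℝ) ≤ dist a.2 b.2) p]
  calc lambdaP p (dist a.1 b.1) (dist a.2 b.2) ≤ (D ^ p) ^ (1/p) :=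
        lambdaP_le_of_abs_le hp habs
    _ = D := rpow_oneDiv_rpow hp hD0

lemma le_pDistortion {X Y : Type} [MetricSpace X] [CompactSpace X]
    [MetricSpace Y] [CompactSpace Y] {p : ℝ} (hp : 0 < p) {R : Set (X × Y)}
    {a b : X × Y} (ha : a ∈ R) (hb : b ∈ R) :
    lambdaP p (dist a.1 b.1) (dist a.2 b.2) ≤ pDistortion p R :=
  le_csSup (distSet_bddAbove p hp R) ⟨a, ha, b, hb, rfl⟩

lemma pDistortion_nonneg {X Y : Type} [MetricSpace X] [CompactSpace X] [Nonempty X]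
    [MetricSpace Y] [CompactSpace Y] {p : ℝ} (hp : 0 < p) {R : Set (X × Y)}
    (hR : IsCorrespondence R) : 0 ≤ pDistortion p R := by
  obtain ⟨y0, hy0⟩ := hR.1 (Classical.arbitrary X)
  exact le_trans (lambdaP_nonneg _ _ _) (le_pDistortion hp hy0 hy0)

lemma part1 (p : ℝ) (hp : 1 ≤ p) (X Y : Type)
    [MetricSpace X] [CompactSpace X] [Nonempty X]
    [MetricSpace Y] [CompactSpace Y] [Nonempty Y]
    (hX : ∀ x y z : X, dist x z ^ p ≤ dist x y ^ p + dist y z ^ p)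
    (hY : ∀ x y z : Y, dist x z ^ p ≤ dist x y ^ p + dist y z ^ p)
    (ε δ : ℝ) (hε : 0 ≤ ε) (hδ : 0 ≤ δ) (N : ℕ) (x : Fin N → X) (y : Fin N → Y)
    (hxnet : ∀ z : X, ∃ i, dist z (x i) ≤ ε)
    (hynet : ∀ w : Y, ∃ i, dist w (y i) ≤ ε)
    (hΛ : ∀ i j, lambdaP p (dist (x i) (x j)) (dist (y i) (y j)) ≤ δ) :
    dGHp p X Y ≤ (δ ^ p + 2 * ε ^ p) ^ (1 / p) := by
  have hp0 : 0 < p := lt_of_lt_of_le one_pos hp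
  set R : Set (X × Y) :=
    {zw | (∃ i, dist zw.1 (x i) ≤ ε ∧ zw.2 = y i) ∨ (∃ i, zw.1 = x i ∧ dist zw.2 (y i) ≤ ε)}
    with hRdef
  have hcorr : IsCorrespondence R := by
    constructor
    · intro z
      obtain ⟨i, hi⟩ := hxnet z
      exact ⟨y i, Or.inl ⟨i, hi, rfl⟩⟩
    · intro w
      obtain ⟨i, hi⟩ := hynet w
      exact ⟨x i, Or.inr ⟨i, rfl, hi⟩⟩
  have hΛ' : ∀ i j, |dist (x i) (x j) ^ p - dist (y i) (y j) ^ p| ≤ δ ^ p :=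
    fun i j => abs_le_of_lambdaP_le hp0 hδ (hΛ i j)
  have hεp : ∀ {z : X} {i : Fin N}, dist z (x i) ≤ ε → dist z (x i) ^ p ≤ ε ^ p :=
    fun h => Real.rpow_le_rpow dist_nonneg h hp0.le
  have hεpY : ∀ {w : Y} {i : Fin N}, dist w (y i) ≤ ε → dist w (y i) ^ p ≤ ε ^ p :=
    fun h => Real.rpow_le_rpow dist_nonneg h hp0.le
  have cX : ∀ a b : X, dist a b ^ p = dist b a ^ p := fun a b => by rw [dist_comm]
  have cY : ∀ a b : Y, dist a b ^ p = dist b a ^ p := fun a b => by rw [dist_comm]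
  have key : ∀ a ∈ R, ∀ b ∈ R,
      |dist a.1 b.1 ^ p - dist a.2 b.2 ^ p| ≤ δ ^ p + 2 * ε ^ p := by
    rintro ⟨z, w⟩ (⟨i, hiz, rfl⟩ | ⟨i, rfl, hiw⟩) ⟨z', w'⟩ (⟨j, hjz, rfl⟩ | ⟨j, rfl, hjw⟩) <;>
        simp only at * <;> rw [abs_sub_le_iff]
    · -- LL
      have h1 := hεp hiz; have h2 := hεp hjz
      have hd := abs_sub_le_iff.mp (hΛ' i j)
      constructor <;>
        linarith [hX z (x i) z', hX (x i) (x j) z', hX (x i) z (x j), hX z z' (x j),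
          hd.1, hd.2, cX (x j) z', cX z (x i), cX z' (x j), cX (x i) z]
    · -- LR
      have h1 := hεp hiz; have h2 := hεpY hjw
      have hd := abs_sub_le_iff.mp (hΛ' i j)
      constructor <;>
        linarith [hX z (x i) (x j), hY (y i) w' (y j), hY (y i) (y j) w', hX (x i) z (x j),
          hd.1, hd.2, cX z (x i), cX (x i) z, cY w' (y j), cY (y j) w']
    · -- RL
      have h1 := hεpY hiw; have h2 := hεp hjz
      have hd := abs_sub_le_iff.mp (hΛ' i j)
      constructor <;>
        linarith [hX (x i) (x j) z', hY (y i) w (y j), hY w (y i) (y j), hX (x i) z' (x j),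
          hd.1, hd.2, cX z' (x j), cX (x j) z', cY w (y i), cY (y i) w]
    · -- RR
      have h1 := hεpY hiw; have h2 := hεpY hjw
      have hd := abs_sub_le_iff.mp (hΛ' i j)
      constructor <;>
        linarith [hY (y i) w (y j), hY w w' (y j), hY w (y i) w', hY (y i) (y j) w',
          hd.1, hd.2, cY w (y i), cY (y i) w, cY w' (y j), cY (y j) w']
  have hbnd0 : (0:ℝ) ≤ δ ^ p + 2 * ε ^ p := by positivity
  have hdis : pDistortion p R ≤ (δ ^ p + 2 * ε ^ p) ^ (1 / p) := by
    apply Real.sSup_le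
    · rintro r ⟨a, ha, b, hb, rfl⟩
      exact lambdaP_le_of_abs_le hp0 (key a ha b hb)
    · positivity
  -- conclude
  set S : Set ℝ := {r : ℝ | ∃ R : Set (X × Y), IsCorrespondence R ∧ r = pDistortion p R}
  have hSne : S.Nonempty := ⟨pDistortion p R, R, hcorr, rfl⟩
  have hSbd : BddBelow S := ⟨0, by rintro r ⟨R', hR', rfl⟩; exact pDistortion_nonneg hp0 hR'⟩
  have hinf_le : sInf S ≤ (δ ^ p + 2 * ε ^ p) ^ (1 / p) :=
    le_trans (csInf_le hSbd ⟨R, hcorr, rfl⟩) hdis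
  have hinf0 : 0 ≤ sInf S := le_csInf hSne (by rintro r ⟨R', hR', rfl⟩; exact pDistortion_nonneg hp0 hR')
  have h2le1 : (2:ℝ) ^ (-(1/p)) ≤ 1 :=
    Real.rpow_le_one_of_one_le_of_nonpos (by norm_num) (by positivity |> fun h => neg_nonpos.mpr h)
  calc dGHp p X Y = (2:ℝ) ^ (-(1/p)) * sInf S := rfl
    _ ≤ 1 * sInf S := mul_le_mul_of_nonneg_right h2le1 hinf0
    _ = sInf S := one_mul _
    _ ≤ _ := hinf_le

lemma part2 (p : ℝ) (hp : 1 ≤ p) (X Y : Type)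
    [MetricSpace X] [CompactSpace X] [Nonempty X]
    [MetricSpace Y] [CompactSpace Y] [Nonempty Y]
    (ε : ℝ) (hε : 0 < ε) (hle : dGHp p X Y ≤ ε) :
    ∃ N : ℕ, ∃ x : Fin N → X, ∃ y : Fin N → Y,
      (∀ z : X, ∃ i, dist z (x i) ≤ (5 : ℝ) ^ (1 / p) * ε) ∧
      (∀ w : Y, ∃ i, dist w (y i) ≤ (5 : ℝ) ^ (1 / p) * ε) ∧
      ∀ i j, lambdaP p (dist (x i) (x j)) (dist (y i) (y j)) ≤ (2 : ℝ) ^ (1 / p) * ε := by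
  have hp0 : 0 < p := lt_of_lt_of_le one_pos hp
  -- sInf of distortions is ≤ 2^(1/p) ε
  set S : Set ℝ := {r : ℝ | ∃ R : Set (X × Y), IsCorrespondence R ∧ r = pDistortion p R}
    with hS
  have hSne : S.Nonempty := by
    refine ⟨pDistortion p (Set.univ : Set (X × Y)), Set.univ, ⟨?_, ?_⟩, rfl⟩
    · exact fun x => ⟨Classical.arbitrary Y, trivial⟩
    · exact fun y => ⟨Classical.arbitrary X, trivial⟩
  have hSbd : BddBelow S := ⟨0, by rintro r ⟨R', hR', rfl⟩; exact pDistortion_nonneg hp0 hR'⟩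
  have hinf : sInf S ≤ (2:ℝ) ^ (1/p) * ε := by
    have h2 : (0:ℝ) < (2:ℝ) ^ (-(1/p)) := Real.rpow_pos_of_pos (by norm_num) _
    have hmul : (2:ℝ) ^ (1/p) * (2:ℝ) ^ (-(1/p)) = 1 := by
      rw [← Real.rpow_add (by norm_num : (0:ℝ) < 2)]; simp
    have := mul_le_mul_of_nonneg_left hle (le_of_lt (Real.rpow_pos_of_pos (by norm_num : (0:ℝ)<2) (1/p)))
    calc sInf S = (2:ℝ) ^ (1/p) * ((2:ℝ) ^ (-(1/p)) * sInf S) := by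
          rw [← mul_assoc, hmul, one_mul]
      _ ≤ (2:ℝ) ^ (1/p) * ε := this
  -- fixed ε-net of X
  obtain ⟨t, htfin, htcov⟩ := (Metric.totallyBounded_iff).1 (isCompact_univ (X := X)).totallyBounded ε hε
  set s : Finset X := htfin.toFinset with hsdef
  set N : ℕ := s.card with hN
  set x : Fin N → X := fun i => (s.equivFin.symm i : X) with hx
  have hxnet : ∀ z : X, ∃ i, dist z (x i) ≤ ε := by
    intro z
    have : z ∈ ⋃ y ∈ t, Metric.ball y ε := htcov (Set.mem_univ z)
    simp only [Set.mem_iUnion, Metric.mem_ball] at this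
    obtain ⟨c, hc, hcd⟩ := this
    refine ⟨s.equivFin ⟨c, htfin.mem_toFinset.2 hc⟩, ?_⟩
    simp only [hx, Equiv.symm_apply_apply]
    exact hcd.le
  have hNpos : Nonempty (Fin N) := by
    obtain ⟨i, _⟩ := hxnet (Classical.arbitrary X); exact ⟨i⟩
  -- the nested closed sets
  set T : ℕ → Set (Fin N → Y) := fun n =>
    {y | (∀ i j, |dist (x i) (x j) ^ p - dist (y i) (y j) ^ p| ≤ 2 * ε ^ p + 1/(n+1)) ∧
         (∀ w : Y, ∃ i, dist w (y i) ^ p ≤ 3 * ε ^ p + 1/(n+1))} with hT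
  have hTsub : ∀ n, T (n+1) ⊆ T n := by
    intro n y hy
    have hmono : (1:ℝ)/(n+1+1) ≤ 1/(n+1) := by
      apply one_div_le_one_div_of_le (by positivity) (by linarith)
    constructor
    · intro i j
      calc |dist (x i) (x j) ^ p - dist (y i) (y j) ^ p| ≤ 2 * ε ^ p + 1/(n+1+1) := by
            have := hy.1 i j; push_cast at this ⊢; linarith
        _ ≤ 2 * ε ^ p + 1/(n+1) := by linarith
    · intro w
      obtain ⟨i, hi⟩ := hy.2 w
      refine ⟨i, ?_⟩
      push_cast at hi ⊢; linarith
  have hTclosed : ∀ n, IsClosed (T n) := by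
    intro n
    have hrw : T n = (⋂ i, ⋂ j, {y : Fin N → Y |
        |dist (x i) (x j) ^ p - dist (y i) (y j) ^ p| ≤ 2 * ε ^ p + 1/(n+1)}) ∩
        ⋂ w : Y, ⋃ i, {y : Fin N → Y | dist w (y i) ^ p ≤ 3 * ε ^ p + 1/(n+1)} := by
      ext y
      simp only [hT, Set.mem_setOf_eq, Set.mem_inter_iff, Set.mem_iInter, Set.mem_iUnion]
    rw [hrw]
    have hcont : ∀ i j : Fin N, Continuous fun y : Fin N → Y => dist (y i) (y j) ^ p :=
      fun i j => ((continuous_apply i).dist (continuous_apply j)).rpow_const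
        (fun _ => Or.inr hp0.le)
    refine IsClosed.inter (isClosed_iInter fun i => isClosed_iInter fun j => ?_)
      (isClosed_iInter fun w => isClosed_iUnion_of_finite fun i => ?_)
    · exact isClosed_le ((continuous_const.sub (hcont i j)).abs) continuous_const
    · exact isClosed_le ((continuous_const.dist (continuous_apply i)).rpow_const
        (fun _ => Or.inr hp0.le)) continuous_const
  have hTne : ∀ n : ℕ, (T n).Nonempty := by
    intro n
    have hc : (0:ℝ) < 1/(n+1) := by positivity
    -- pick R with distortion < (2 ε^p + 1/(n+1))^(1/p)
    have hlt : sInf S < (2 * ε ^ p + 1/(n+1)) ^ (1/p) := by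
      have h1 : (2:ℝ) ^ (1/p) * ε = (2 * ε ^ p) ^ (1/p) := by
        rw [Real.mul_rpow (by norm_num) (Real.rpow_nonneg hε.le p),
          rpow_oneDiv_rpow hp0 hε.le]
      have h2 : (2 * ε ^ p : ℝ) ^ (1/p) < (2 * ε ^ p + 1/(n+1)) ^ (1/p) :=
        Real.rpow_lt_rpow (by positivity) (by linarith) (by positivity)
      linarith [hinf, h1 ▸ hinf]
    obtain ⟨r, hrS, hrlt⟩ := (csInf_lt_iff hSbd hSne).1 hlt
    obtain ⟨R, hRcorr, rfl⟩ := hrS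
    have hdis : ∀ a ∈ R, ∀ b ∈ R,
        |dist a.1 b.1 ^ p - dist a.2 b.2 ^ p| ≤ 2 * ε ^ p + 1/(n+1) := by
      intro a ha b hb
      have h1 : lambdaP p (dist a.1 b.1) (dist a.2 b.2) ≤ (2 * ε ^ p + 1/(n+1)) ^ (1/p) :=
        le_trans (le_pDistortion hp0 ha hb) hrlt.le
      have := abs_le_of_lambdaP_le hp0 (Real.rpow_nonneg (by positivity) _) h1
      rwa [rpow_rpow_oneDiv hp0 (by positivity)] at this
    -- choose y i paired with x i
    choose yc hyc using hRcorr.1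
    refine ⟨fun i => yc (x i), ?_, ?_⟩
    · intro i j
      exact hdis (x i, yc (x i)) (hyc (x i)) (x j, yc (x j)) (hyc (x j))
    · intro w
      obtain ⟨z, hz⟩ := hRcorr.2 w
      obtain ⟨i, hi⟩ := hxnet z
      refine ⟨i, ?_⟩
      have hd := hdis (z, w) hz (x i, yc (x i)) (hyc (x i))
      simp only at hd
      have h1 : dist z (x i) ^ p ≤ ε ^ p := Real.rpow_le_rpow dist_nonneg hi hp0.le
      have := abs_sub_le_iff.mp hd
      have hcw : dist w (yc (x i)) ^ p = dist (w) (yc (x i)) ^ p := rfl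
      rw [dist_comm w (yc (x i))] at *
      linarith [this.1, this.2]
  -- compact intersection
  have hTcomp : IsCompact (T 0) := (hTclosed 0).isCompact
  obtain ⟨y, hy⟩ := IsCompact.nonempty_iInter_of_sequence_nonempty_isCompact_isClosed
    T hTsub hTne hTcomp hTclosed
  simp only [Set.mem_iInter] at hy
  -- limit bounds
  have hlim : ∀ a b : ℝ, (∀ n : ℕ, a ≤ b + 1/(n+1)) → a ≤ b := by
    intro a b h
    refine le_of_forall_pos_le_add fun η hη => ?_
    obtain ⟨n, hn⟩ := exists_nat_one_div_lt hη
    have := h n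
    push_cast at this
    linarith
  have hΛfin : ∀ i j, |dist (x i) (x j) ^ p - dist (y i) (y j) ^ p| ≤ 2 * ε ^ p := by
    intro i j
    exact hlim _ _ fun n => by have := (hy n).1 i j; push_cast at this ⊢; linarith
  have hynet : ∀ w : Y, ∃ i, dist w (y i) ^ p ≤ 3 * ε ^ p := by
    intro w
    have hmin : ∀ n : ℕ, (Finset.univ.inf' (Finset.univ_nonempty) fun i => dist w (y i) ^ p)
        ≤ 3 * ε ^ p + 1/(n+1) := by
      intro n
      obtain ⟨i, hi⟩ := (hy n).2 w
      exact le_trans (Finset.inf'_le _ (Finset.mem_univ i)) (by push_cast at hi ⊢; linarith)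
    have := hlim _ _ hmin
    obtain ⟨i, _, hieq⟩ := Finset.exists_mem_eq_inf' (Finset.univ_nonempty) fun i => dist w (y i) ^ p
    exact ⟨i, by rw [hieq] at this; exact this⟩
  -- conclude
  have h5 : (1:ℝ) ≤ (5:ℝ) ^ (1/p) := Real.one_le_rpow (by norm_num) (by positivity)
  refine ⟨N, x, y, ?_, ?_, ?_⟩
  · intro z
    obtain ⟨i, hi⟩ := hxnet z
    exact ⟨i, hi.trans (by nlinarith)⟩
  · intro w
    obtain ⟨i, hi⟩ := hynet w
    refine ⟨i, ?_⟩
    have h5e : ((5:ℝ) ^ (1/p) * ε) = (5 * ε ^ p) ^ (1/p) := by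
      rw [Real.mul_rpow (by norm_num) (Real.rpow_nonneg hε.le p), rpow_oneDiv_rpow hp0 hε.le]
    rw [h5e]
    calc dist w (y i) = (dist w (y i) ^ p) ^ (1/p) := (rpow_oneDiv_rpow hp0 dist_nonneg).symm
      _ ≤ (5 * ε ^ p) ^ (1/p) := Real.rpow_le_rpow (by positivity) (by nlinarith [Real.rpow_nonneg (hε.le) p]) (by positivity)
  · intro i j
    have h2e : ((2:ℝ) ^ (1/p) * ε) = (2 * ε ^ p) ^ (1/p) := by
      rw [Real.mul_rpow (by norm_num) (Real.rpow_nonneg hε.le p), rpow_oneDiv_rpow hp0 hε.le]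
    rw [h2e]
    exact lambdaP_le_of_abs_le hp0 (by linarith [hΛfin i j])

/-- `(ε,δ,p)`-approximations and `d_GH^{(p)}` for compact `p`-metric spaces:
(1) if `X` and `Y` admit `ε`-nets of common size `N` whose pairwise distances differ by
at most `δ` in the `Λ_p` sense, then `d_GH^{(p)}(X,Y) ≤ (δ^p + 2ε^p)^(1/p)`;
(2) if `d_GH^{(p)}(X,Y) ≤ ε`, then there are `5^(1/p)ε`-nets of common size in `X` and
`Y` whose pairwise distances differ by at most `2^(1/p)ε` in the `Λ_p` sense. -/
theorem dGHp_approximation (p : ℝ) (hp : 1 ≤ p)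
    (X Y : Type)
    [MetricSpace X] [CompactSpace X] [Nonempty X]
    [MetricSpace Y] [CompactSpace Y] [Nonempty Y]
    (hX : ∀ x y z : X, dist x z ^ p ≤ dist x y ^ p + dist y z ^ p)
    (hY : ∀ x y z : Y, dist x z ^ p ≤ dist x y ^ p + dist y z ^ p) :
    (∀ ε δ : ℝ, 0 ≤ ε → 0 ≤ δ → ∀ N : ℕ, ∀ x : Fin N → X, ∀ y : Fin N → Y,
        (∀ z : X, ∃ i, dist z (x i) ≤ ε) →
        (∀ w : Y, ∃ i, dist w (y i) ≤ ε) →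
        (∀ i j, lambdaP p (dist (x i) (x j)) (dist (y i) (y j)) ≤ δ) →
        dGHp p X Y ≤ (δ ^ p + 2 * ε ^ p) ^ (1 / p)) ∧
    (∀ ε : ℝ, 0 < ε → dGHp p X Y ≤ ε →
      ∃ N : ℕ, ∃ x : Fin N → X, ∃ y : Fin N → Y,
        (∀ z : X, ∃ i, dist z (x i) ≤ (5 : ℝ) ^ (1 / p) * ε) ∧
        (∀ w : Y, ∃ i, dist w (y i) ≤ (5 : ℝ) ^ (1 / p) * ε) ∧
        ∀ i j, lambdaP p (dist (x i) (x j)) (dist (y i) (y j)) ≤ (2 : ℝ) ^ (1 / p) * ε) := by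
  refine ⟨fun ε δ hε hδ N x y h1 h2 h3 =>
    part1 p hp X Y hX hY ε δ hε hδ N x y h1 h2 h3,
    fun ε hε hle => part2 p hp X Y ε hε hle⟩
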